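/- arXiv:1703.04028 — 5 statements merged into one kernel-verified Lean document; each statement's English description precedes it below -/
import Mathlib

section
/- For each z ∈ ℂ, the set G(z) = { (⟨⟨a,b⟩,⟨z·c,d⟩⟩, ⟨⟨a,z·b⟩,⟨c,d⟩⟩) : a,b,c,d ∈ ℂ, ad - z·b·c = 1 } is a subgroup of GL(2,ℂ)×GL(2,ℂ). -/
open Matrix

noncomputable section

/-- For each z ∈ ℂ, the set
G(z) = { (⟨⟨a,b⟩,⟨z·c,d⟩⟩, ⟨⟨a,z·b⟩,⟨c,d⟩⟩) : a,b,c,d ∈ ℂ, ad − z·b·c = 1 }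
is a subgroup of GL(2,ℂ) × GL(2,ℂ). -/
theorem fiber_is_subgroup (z : ℂ) :
    ∃ S : Subgroup (GeneralLinearGroup (Fin 2) ℂ × GeneralLinearGroup (Fin 2) ℂ),
      (S : Set (GeneralLinearGroup (Fin 2) ℂ × GeneralLinearGroup (Fin 2) ℂ)) =
        {P | ∃ a b c d : ℂ, a * d - z * b * c = 1 ∧
          (P.1 : Matrix (Fin 2) (Fin 2) ℂ) = !![a, b; z * c, d] ∧
          (P.2 : Matrix (Fin 2) (Fin 2) ℂ) = !![a, z * b; c, d]} := by
  refine ⟨{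
    carrier := {P | ∃ a b c d : ℂ, a * d - z * b * c = 1 ∧
      (P.1 : Matrix (Fin 2) (Fin 2) ℂ) = !![a, b; z * c, d] ∧
      (P.2 : Matrix (Fin 2) (Fin 2) ℂ) = !![a, z * b; c, d]}
    one_mem' := ⟨1, 0, 0, 1, by ring, by simp [Matrix.one_fin_two], by
      simp [Matrix.one_fin_two]⟩
    mul_mem' := ?_
    inv_mem' := ?_ }, rfl⟩
  · rintro P Q ⟨a, b, c, d, h, h1, h2⟩ ⟨a', b', c', d', h', h1', h2'⟩
    refine ⟨a * a' + z * b * c', a * b' + b * d', c * a' + d * c',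
      z * c * b' + d * d', ?_, ?_, ?_⟩
    · have : (a * a' + z * b * c') * (z * c * b' + d * d') -
        z * (a * b' + b * d') * (c * a' + d * c') =
        (a * d - z * b * c) * (a' * d' - z * b' * c') := by ring
      rw [this, h, h', one_mul]
    · show ((P.1 * Q.1 : GeneralLinearGroup (Fin 2) ℂ) : Matrix (Fin 2) (Fin 2) ℂ) = _
      rw [Units.val_mul, h1, h1']
      ext i j
      fin_cases i <;> fin_cases j <;> simp [Matrix.mul_apply, Fin.sum_univ_two] <;> ring
    · show ((P.2 * Q.2 : GeneralLinearGroup (Fin 2) ℂ) : Matrix (Fin 2) (Fin 2) ℂ) = _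
      rw [Units.val_mul, h2, h2']
      ext i j
      fin_cases i <;> fin_cases j <;> simp [Matrix.mul_apply, Fin.sum_univ_two] <;> ring
  · rintro P ⟨a, b, c, d, h, h1, h2⟩
    refine ⟨d, -b, -c, a, by ring_nf; linear_combination h, ?_, ?_⟩
    · show ((P.1⁻¹ : GeneralLinearGroup (Fin 2) ℂ) : Matrix (Fin 2) (Fin 2) ℂ) = _
      rw [Matrix.coe_units_inv, h1]
      apply Matrix.inv_eq_right_inv
      ext i j
      fin_cases i <;> fin_cases j <;>
        simp [Matrix.mul_apply, Fin.sum_univ_two, Matrix.one_apply] <;>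
        first | linear_combination h | linear_combination -h | ring
    · show ((P.2⁻¹ : GeneralLinearGroup (Fin 2) ℂ) : Matrix (Fin 2) (Fin 2) ℂ) = _
      rw [Matrix.coe_units_inv, h2]
      apply Matrix.inv_eq_right_inv
      ext i j
      fin_cases i <;> fin_cases j <;>
        simp [Matrix.mul_apply, Fin.sum_univ_two, Matrix.one_apply] <;>
        first | linear_combination h | linear_combination -h | ring
end
end

section
/- Fix x ∈ ℂ, x ≠ 0, and set B_k = -(1/4)·(1 + x·(1+k)²) for even k ≥ 0, A_k = -(1/4)·(1 + x·(1+k)²) for even k < 0, with A_k = 1 for k ≥ 0 and B_k = 1 for k < 0. Then the operators H·f_k = k f_k, E·f_k = A_k f_{k+2}, F·f_{k+2} = B_k f_k on V = ⊕_{k∈2ℤ} ℂ f_k satisfy [E,F] = x·H, and the Casimir C = H² + 2H + (4/x)FE acts as the scalar -(1+x)/x on every f_k. -/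
noncomputable section

/-- The set of even integers, indexing the basis {f_k : k ∈ 2ℤ}. -/
def E2 : Type := {k : ℤ // Even k}

instance : DecidableEq E2 := fun a b => decidable_of_iff _ Subtype.ext_iff.symm

/-- k ↦ k + 2 on even integers. -/
def E2.up (k : E2) : E2 := ⟨k.1 + 2, by obtain ⟨m, hm⟩ := k.2; exact ⟨m + 1, by omega⟩⟩

/-- k ↦ k - 2 on even integers. -/
def E2.dn (k : E2) : E2 := ⟨k.1 - 2, by obtain ⟨m, hm⟩ := k.2; exact ⟨m - 1, by omega⟩⟩

/-- V = ⊕_{k ∈ 2ℤ} ℂ·f_k, with f_k = `Finsupp.single k 1`. -/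
abbrev Vsp : Type := E2 →₀ ℂ

/-- H·f_k = k·f_k. -/
def opH : Vsp →ₗ[ℂ] Vsp :=
  Finsupp.lsum ℂ fun k => (k.1 : ℂ) • Finsupp.lsingle k

/-- E·f_k = A_k·f_{k+2}. -/
def opE (A : E2 → ℂ) : Vsp →ₗ[ℂ] Vsp :=
  Finsupp.lsum ℂ fun k => A k • Finsupp.lsingle k.up

/-- F·f_{k+2} = B_k·f_k, i.e. F·f_k = B_{k-2}·f_{k-2}. -/
def opF (B : E2 → ℂ) : Vsp →ₗ[ℂ] Vsp :=
  Finsupp.lsum ℂ fun k => B k.dn • Finsupp.lsingle k.dn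

/-- With A_k = 1 for k ≥ 0, A_k = −(1/4)(1 + x(1+k)²) for k < 0, B_k = −(1/4)(1 + x(1+k)²)
for k ≥ 0 and B_k = 1 for k < 0, the operators satisfy [E,F] = x·H and the Casimir
C = H² + 2H + (4/x)FE acts as the scalar −(1+x)/x on every f_k. -/
theorem contraction_family_casimir (x : ℂ) (hx : x ≠ 0) (A B : E2 → ℂ)
    (hA : ∀ k : E2, A k =
      if 0 ≤ k.1 then 1 else -(1 / 4) * (1 + x * (1 + (k.1 : ℂ)) ^ 2))
    (hB : ∀ k : E2, B k =
      if 0 ≤ k.1 then -(1 / 4) * (1 + x * (1 + (k.1 : ℂ)) ^ 2) else 1) :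
    opE A ∘ₗ opF B - opF B ∘ₗ opE A = x • opH ∧
    ∀ k : E2, (opH ∘ₗ opH + (2 : ℂ) • opH + (4 / x) • (opF B ∘ₗ opE A))
        (Finsupp.single k 1) = (-(1 + x) / x) • Finsupp.single k 1 := by

  have hup : ∀ k : E2, k.up.dn = k := fun k => Subtype.ext (by simp [E2.up, E2.dn])
  have hdn : ∀ k : E2, k.dn.up = k := fun k => Subtype.ext (by simp [E2.up, E2.dn])
  have hdnv : ∀ k : E2, (k.dn.1 : ℂ) = (k.1 : ℂ) - 2 := by
    intro k; simp [E2.dn]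
  have hE : ∀ (k : E2) (c : ℂ), opE A (Finsupp.single k c) = A k • Finsupp.single k.up c := by
    intro k c; simp [opE]
  have hF : ∀ (k : E2) (c : ℂ), opF B (Finsupp.single k c) = B k.dn • Finsupp.single k.dn c := by
    intro k c; simp [opF]
  have hH : ∀ (k : E2) (c : ℂ), opH (Finsupp.single k c) = (k.1 : ℂ) • Finsupp.single k c := by
    intro k c; simp [opH]
  have key : ∀ k : E2, A k * B k = -(1/4) * (1 + x * (1 + (k.1 : ℂ))^2) := by
    intro k
    rcases le_or_gt 0 k.1 with h | h
    · rw [hA, hB]; simp [h]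
    · rw [hA, hB]; simp [not_le.mpr h]
  constructor
  · apply Finsupp.lhom_ext
    intro k c
    rw [LinearMap.sub_apply, LinearMap.comp_apply, LinearMap.comp_apply, hF, hE,
      map_smul, map_smul, hE, hF, hdn, hup, LinearMap.smul_apply, hH,
      smul_smul, smul_smul, smul_smul]
    rw [← sub_smul]
    congr 1
    have k1 := key k
    have k2 := key k.dn
    rw [hdnv] at k2
    rw [mul_comm (B k.dn)] at *
    rw [k1, k2]
    ring
  · intro k
    rw [LinearMap.add_apply, LinearMap.add_apply, LinearMap.comp_apply, hH, map_smul, hH,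
      LinearMap.smul_apply, hH, LinearMap.smul_apply, LinearMap.comp_apply, hE, map_smul,
      hF, hup, smul_smul, smul_smul, smul_smul, smul_smul, ← add_smul, ← add_smul]
    congr 1
    rw [mul_assoc, key k]
    field_simp
    ring
end
end

section
/- In the setting of the deformed sl(2)-module with Casimir -(1+x)/x at x = -(2m+1)^{-2}: with A_k = 1 (k ≥ 0), B_k = -(1/4)(1 + x(1+k)²) (k ≥ 0), A_k = -(1/4)(1 + x(1+k)²) (k < 0), B_k = 1 (k < 0), the subspace W = span{ f_k : |k| > 2m } of V = ⊕_{k∈2ℤ} ℂf_k is invariant under H, E, F, and the quotient V/W is an irreducible (2m+1)-dimensional module spanned by the images of f_{-2m}, f_{-2m+2}, ..., f_{2m}. -/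
noncomputable section

def gE (n : ℤ) : E2 := ⟨2*n, ⟨n, by ring⟩⟩

lemma gE_val (n : ℤ) : (gE n).1 = 2*n := rfl

lemma gE_up (n : ℤ) : (gE n).up = gE (n+1) := Subtype.ext (by show 2*n+2 = 2*(n+1); ring)

lemma gE_dn (n : ℤ) : (gE n).dn = gE (n-1) := Subtype.ext (by show 2*n-2 = 2*(n-1); ring)

lemma gE_inj : Function.Injective gE := fun a b h => by
  have : (gE a).1 = (gE b).1 := congrArg Subtype.val h
  rw [gE_val, gE_val] at this; omega

lemma exists_gE (k : E2) : ∃ n, k = gE n := by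
  obtain ⟨r, hr⟩ := k.2
  exact ⟨r, Subtype.ext (by rw [gE_val]; omega)⟩

lemma opH_single (k : E2) (c : ℂ) : opH (Finsupp.single k c) = (k.1 : ℂ) • Finsupp.single k c := by
  rw [opH, Finsupp.lsum_single]; rfl

lemma opE_single (A : E2 → ℂ) (k : E2) (c : ℂ) :
    opE A (Finsupp.single k c) = A k • Finsupp.single k.up c := by
  rw [opE, Finsupp.lsum_single]; rfl

lemma opF_single (B : E2 → ℂ) (k : E2) (c : ℂ) :
    opF B (Finsupp.single k c) = B k.dn • Finsupp.single k.dn c := by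
  rw [opF, Finsupp.lsum_single]; rfl

lemma opH_apply (v : Vsp) (j : E2) : opH v (j) = (j.1 : ℂ) * v j := by
  classical
  rw [opH, Finsupp.lsum_apply, Finsupp.sum_apply]
  rw [Finsupp.sum]
  simp only [LinearMap.smul_apply, Finsupp.lsingle_apply, Finsupp.smul_apply,
    Finsupp.single_apply, smul_eq_mul, mul_ite, mul_zero]
  rw [Finset.sum_ite_eq' v.support j (fun k => (k.1:ℂ) * v k)]
  by_cases h : j ∈ v.support
  · simp [h]
  · simp [h, Finsupp.notMem_support_iff.mp h]

def pOp (c : ℂ) : Module.End ℂ Vsp := opH - c • 1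

lemma pOp_apply (c : ℂ) (v : Vsp) (j : E2) : pOp c v j = ((j.1 : ℂ) - c) * v j := by
  simp [pOp, opH_apply, sub_mul, LinearMap.sub_apply]

def pOps (l : List E2) : Module.End ℂ Vsp := (l.map fun k => pOp k.1).prod

lemma pOps_apply (l : List E2) (v : Vsp) (j : E2) :
    pOps l v j = (l.map fun k => ((j.1 : ℂ) - k.1)).prod * v j := by
  induction l with
  | nil => simp [pOps]
  | cons a l ih =>
    simp only [pOps, List.map_cons, List.prod_cons, Module.End.mul_apply] at *
    rw [pOp_apply, ih]; ring

lemma pOps_mem (U : Submodule ℂ Vsp) (hU : ∀ v ∈ U, opH v ∈ U) (l : List E2)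
    (v : Vsp) (hv : v ∈ U) : pOps l v ∈ U := by
  induction l with
  | nil => simpa [pOps] using hv
  | cons a l ih =>
    simp only [pOps, List.map_cons, List.prod_cons, Module.End.mul_apply] at *
    have h1 := hU _ ih
    have : pOp a.1 (pOps l v) = opH (pOps l v) - (a.1:ℂ) • (pOps l v) := by
      simp [pOp, LinearMap.sub_apply]
    simp only [pOps] at this
    rw [this]
    exact U.sub_mem h1 (U.smul_mem _ ih)

/-- At x = −(2m+1)⁻², with A_k = 1 (k ≥ 0), B_k = −(1/4)(1 + x(1+k)²) (k ≥ 0),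
A_k = −(1/4)(1 + x(1+k)²) (k < 0), B_k = 1 (k < 0), the subspace
W = span{f_k : |k| > 2m} is invariant under H, E, F, and the quotient V/W is an
irreducible (2m+1)-dimensional module spanned by the images of f_{−2m}, ..., f_{2m}. -/
theorem finite_dimensional_quotient (m : ℕ) (x : ℂ)
    (hx : x = -((2 * (m : ℂ) + 1) ^ 2)⁻¹) (A B : E2 → ℂ)
    (hA : ∀ k : E2, A k =
      if 0 ≤ k.1 then 1 else -(1 / 4) * (1 + x * (1 + (k.1 : ℂ)) ^ 2))
    (hB : ∀ k : E2, B k =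
      if 0 ≤ k.1 then -(1 / 4) * (1 + x * (1 + (k.1 : ℂ)) ^ 2) else 1)
    (W : Submodule ℂ Vsp)
    (hW : W = Submodule.span ℂ
      {v : Vsp | ∃ k : E2, 2 * (m : ℤ) < |k.1| ∧ v = Finsupp.single k 1}) :
    (∀ v ∈ W, opH v ∈ W ∧ opE A v ∈ W ∧ opF B v ∈ W) ∧
    Module.finrank ℂ (Vsp ⧸ W) = 2 * m + 1 ∧
    Submodule.span ℂ
      (W.mkQ '' {v : Vsp | ∃ k : E2, |k.1| ≤ 2 * (m : ℤ) ∧ v = Finsupp.single k 1}) = ⊤ ∧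
    -- irreducibility of V/W: any invariant subspace between W and V is W or V
    (∀ U : Submodule ℂ Vsp, W ≤ U →
      (∀ v ∈ U, opH v ∈ U ∧ opE A v ∈ U ∧ opF B v ∈ U) → U = W ∨ U = ⊤) := by
  classical
  -- basic abs facts
  have habs : ∀ z : ℤ, 2*(m:ℤ) < |z| ↔ (2*(m:ℤ) < z ∨ z < -(2*(m:ℤ))) := fun z => by
    rcases abs_cases z with ⟨h1, h2⟩ | ⟨h1, h2⟩ <;> rw [h1] <;> omega
  have habs2 : ∀ z : ℤ, |z| ≤ 2*(m:ℤ) ↔ (-(2*(m:ℤ)) ≤ z ∧ z ≤ 2*(m:ℤ)) := fun z => by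
    rcases abs_cases z with ⟨h1, h2⟩ | ⟨h1, h2⟩ <;> rw [h1] <;> omega
  -- W as a supported submodule
  set S : Set E2 := {k : E2 | 2 * (m:ℤ) < |k.1|} with hS
  have hWs : W = Finsupp.supported ℂ ℂ S := by
    rw [hW, Finsupp.supported_eq_span_single]
    congr 1
    ext v
    constructor
    · rintro ⟨k, h1, h2⟩; exact ⟨k, h1, h2.symm⟩
    · rintro ⟨k, h1, h2⟩; exact ⟨k, h1, h2.symm⟩
  have hmemW : ∀ v : Vsp, v ∈ W ↔ ∀ k : E2, |k.1| ≤ 2*(m:ℤ) → v k = 0 := by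
    intro v
    rw [hWs, Finsupp.mem_supported']
    constructor
    · intro h k hk; exact h k (by simp only [hS, Set.mem_setOf_eq]; omega)
    · intro h k hk; exact h k (by simp only [hS, Set.mem_setOf_eq] at hk; omega)
  -- the finite index set
  set Tfin : Finset E2 := (Finset.Icc (-(m:ℤ)) (m:ℤ)).image gE with hTfin
  have hTmem : ∀ k : E2, k ∈ Tfin ↔ |k.1| ≤ 2*(m:ℤ) := by
    intro k
    rw [hTfin, Finset.mem_image]
    constructor
    · rintro ⟨n, hn, rfl⟩
      rw [Finset.mem_Icc] at hn
      rw [gE_val, habs2]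
      omega
    · intro hk
      obtain ⟨n, rfl⟩ := exists_gE k
      rw [gE_val, habs2] at hk
      exact ⟨n, Finset.mem_Icc.mpr (by omega), rfl⟩
  -- key arithmetic
  have hne2m : (2*(m:ℂ)+1) ≠ 0 := by
    have h1 : (2*(m:ℂ)+1) = ((2*m+1:ℕ):ℂ) := by push_cast; ring
    rw [h1]; exact Nat.cast_ne_zero.mpr (by omega)
  have key : ∀ r : ℤ, 1 + x * (1 + 2*(r:ℂ))^2
      = ((2*(m:ℂ)+1)^2 - (1+2*(r:ℂ))^2) / (2*(m:ℂ)+1)^2 := by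
    intro r; rw [hx]; field_simp; ring
  have keyne : ∀ r : ℤ, r ≠ (m:ℤ) → r ≠ -(m:ℤ)-1 → 1 + x * (1 + 2*(r:ℂ))^2 ≠ 0 := by
    intro r h1 h2
    rw [key r]
    apply div_ne_zero _ (pow_ne_zero _ hne2m)
    have hfac : (2*(m:ℂ)+1)^2 - (1+2*(r:ℂ))^2
        = (2*(m:ℂ) - 2*(r:ℂ)) * (2*(m:ℂ) + 2*(r:ℂ) + 2) := by ring
    rw [hfac]
    apply mul_ne_zero
    · intro h
      have h' : ((2*(m:ℤ) - 2*r : ℤ) : ℂ) = 0 := by push_cast; linear_combination h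
      have h'' : (2*(m:ℤ) - 2*r) = (0:ℤ) := by exact_mod_cast h'
      omega
    · intro h
      have h' : ((2*(m:ℤ) + 2*r + 2 : ℤ) : ℂ) = 0 := by push_cast; linear_combination h
      have h'' : (2*(m:ℤ) + 2*r + 2) = (0:ℤ) := by exact_mod_cast h'
      omega
  have keyz : ∀ r : ℤ, (r = (m:ℤ) ∨ r = -(m:ℤ)-1) → 1 + x * (1 + 2*(r:ℂ))^2 = 0 := by
    intro r h
    rw [key r, div_eq_zero_iff]
    left
    rcases h with h | h <;> subst h <;> push_cast <;> ring
  -- nonvanishing/vanishing of A, B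
  have hAne : ∀ k : E2, -(2*(m:ℤ)) ≤ k.1 → A k ≠ 0 := by
    intro k hk
    obtain ⟨r, rfl⟩ := exists_gE k
    rw [gE_val] at hk
    rw [hA]
    rw [gE_val]
    split
    · exact one_ne_zero
    · next h =>
      have : (1 + ((2*r : ℤ):ℂ)) = 1 + 2*(r:ℂ) := by push_cast; ring
      rw [this]
      exact mul_ne_zero (by norm_num) (keyne r (by omega) (by omega))
  have hBne : ∀ k : E2, k.1 < 2*(m:ℤ) → B k ≠ 0 := by
    intro k hk
    obtain ⟨r, rfl⟩ := exists_gE k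
    rw [gE_val] at hk
    rw [hB, gE_val]
    split
    · next h =>
      have : (1 + ((2*r : ℤ):ℂ)) = 1 + 2*(r:ℂ) := by push_cast; ring
      rw [this]
      exact mul_ne_zero (by norm_num) (keyne r (by omega) (by omega))
    · exact one_ne_zero
  have hA0 : ∀ k : E2, k.1 = -(2*(m:ℤ))-2 → A k = 0 := by
    intro k hk
    obtain ⟨r, rfl⟩ := exists_gE k
    rw [gE_val] at hk
    rw [hA, gE_val, if_neg (by omega)]
    have : (1 + ((2*r : ℤ):ℂ)) = 1 + 2*(r:ℂ) := by push_cast; ring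
    rw [this, keyz r (by omega), mul_zero]
  have hB0 : ∀ k : E2, k.1 = 2*(m:ℤ) → B k = 0 := by
    intro k hk
    obtain ⟨r, rfl⟩ := exists_gE k
    rw [gE_val] at hk
    rw [hB, gE_val, if_pos (by omega)]
    have : (1 + ((2*r : ℤ):ℂ)) = 1 + 2*(r:ℂ) := by push_cast; ring
    rw [this, keyz r (by omega), mul_zero]
  -- membership of generators
  have hgenW : ∀ k : E2, 2*(m:ℤ) < |k.1| → Finsupp.single k (1:ℂ) ∈ W := by
    intro k hk
    rw [hW]
    exact Submodule.subset_span ⟨k, hk, rfl⟩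
  -- Part 1: invariance
  have hinv : ∀ v ∈ W, opH v ∈ W ∧ opE A v ∈ W ∧ opF B v ∈ W := by
    have hle : W ≤ (W.comap opH) ⊓ ((W.comap (opE A)) ⊓ (W.comap (opF B))) := by
      conv_lhs => rw [hW]
      rw [Submodule.span_le]
      rintro v ⟨k, hk, rfl⟩
      obtain ⟨r, rfl⟩ := exists_gE k
      rw [gE_val, habs] at hk
      refine ⟨?_, ?_, ?_⟩
      · show opH (Finsupp.single (gE r) 1) ∈ W
        rw [opH_single]
        exact W.smul_mem _ (hgenW _ (by rw [gE_val, habs]; omega))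
      · show opE A (Finsupp.single (gE r) 1) ∈ W
        rw [opE_single, gE_up]
        by_cases hk2 : r = -(m:ℤ)-1
        · rw [hA0 _ (by rw [gE_val]; omega), zero_smul]; exact W.zero_mem
        · exact W.smul_mem _ (hgenW _ (by rw [gE_val, habs]; omega))
      · show opF B (Finsupp.single (gE r) 1) ∈ W
        rw [opF_single, gE_dn]
        by_cases hk2 : r = (m:ℤ)+1
        · rw [hB0 _ (by rw [gE_val]; omega), zero_smul]; exact W.zero_mem
        · exact W.smul_mem _ (hgenW _ (by rw [gE_val, habs]; omega))
    intro v hv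
    have h := hle hv
    exact ⟨h.1, h.2.1, h.2.2⟩
  refine ⟨hinv, ?_, ?_, ?_⟩
  -- Part 2: finrank
  · have hSc : Sᶜ = (↑Tfin : Set E2) := by
      ext k
      simp only [Set.mem_compl_iff, hS, Set.mem_setOf_eq, not_lt, Finset.coe_sort_coe,
        Finset.mem_coe, hTmem]
    have hIsCompl : IsCompl W (Finsupp.supported ℂ ℂ (↑Tfin : Set E2)) := by
      rw [hWs]
      constructor
      · refine Finsupp.disjoint_supported_supported ?_
        rw [← hSc]
        exact disjoint_compl_right
      · rw [codisjoint_iff, ← Finsupp.supported_union, ← hSc, Set.union_compl_self,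
          Finsupp.supported_univ]
    have e := (Submodule.quotientEquivOfIsCompl W _ hIsCompl).trans
      (Finsupp.supportedEquivFinsupp (M := ℂ) (R := ℂ) (↑Tfin : Set E2))
    rw [e.finrank_eq, Module.finrank_finsupp_self]
    simp only [Finset.coe_sort_coe, Fintype.card_coe]
    rw [hTfin, Finset.card_image_of_injective _ gE_inj, Int.card_Icc]
    omega
  -- Part 3: span of images
  · have hXY : ((fun k : E2 => (Finsupp.single k 1 : Vsp)) '' Set.univ)
        = {v : Vsp | ∃ k : E2, |k.1| ≤ 2*(m:ℤ) ∧ v = Finsupp.single k 1}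
          ∪ {v : Vsp | ∃ k : E2, 2*(m:ℤ) < |k.1| ∧ v = Finsupp.single k 1} := by
      ext v
      simp only [Set.image_univ, Set.mem_range, Set.mem_union, Set.mem_setOf_eq]
      constructor
      · rintro ⟨k, rfl⟩
        rcases le_or_gt |k.1| (2*(m:ℤ)) with h | h
        · exact Or.inl ⟨k, h, rfl⟩
        · exact Or.inr ⟨k, h, rfl⟩
      · rintro (⟨k, _, rfl⟩ | ⟨k, _, rfl⟩) <;> exact ⟨k, rfl⟩
    have hbot : Submodule.span ℂ
        (W.mkQ '' {v : Vsp | ∃ k : E2, 2*(m:ℤ) < |k.1| ∧ v = Finsupp.single k 1}) = ⊥ := by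
      rw [Submodule.span_eq_bot]
      rintro _ ⟨v, ⟨k, hk, rfl⟩, rfl⟩
      rw [Submodule.mkQ_apply, Submodule.Quotient.mk_eq_zero]
      exact hgenW k hk
    have htot : Submodule.span ℂ
        ((fun k : E2 => (Finsupp.single k 1 : Vsp)) '' Set.univ) = ⊤ := by
      rw [← Finsupp.supported_eq_span_single, Finsupp.supported_univ]
    calc Submodule.span ℂ
          (W.mkQ '' {v : Vsp | ∃ k : E2, |k.1| ≤ 2*(m:ℤ) ∧ v = Finsupp.single k 1})
        = Submodule.span ℂ
          (W.mkQ '' {v : Vsp | ∃ k : E2, |k.1| ≤ 2*(m:ℤ) ∧ v = Finsupp.single k 1}) ⊔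
          Submodule.span ℂ
          (W.mkQ '' {v : Vsp | ∃ k : E2, 2*(m:ℤ) < |k.1| ∧ v = Finsupp.single k 1}) := by
          rw [hbot, sup_bot_eq]
      _ = Submodule.span ℂ (W.mkQ '' ((fun k : E2 => (Finsupp.single k 1 : Vsp)) '' Set.univ)) := by
          rw [hXY, Set.image_union, Submodule.span_union]
      _ = Submodule.map W.mkQ (Submodule.span ℂ
            ((fun k : E2 => (Finsupp.single k 1 : Vsp)) '' Set.univ)) := by
          rw [Submodule.map_span]
      _ = ⊤ := by rw [htot, Submodule.map_top, Submodule.range_mkQ]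
  -- Part 4: irreducibility
  · intro U hWU hUinv
    by_cases hUW : U = W
    · exact Or.inl hUW
    right
    have hnotle : ¬ U ≤ W := fun h => hUW (le_antisymm h hWU)
    obtain ⟨u, huU, huW⟩ := SetLike.not_le_iff_exists.mp hnotle
    rw [hmemW] at huW
    push_neg at huW
    obtain ⟨j, hj1, hj2⟩ := huW
    have hjT : j ∈ Tfin := (hTmem j).mpr hj1
    set l : List E2 := (Tfin.erase j).toList with hl
    set u' : Vsp := pOps l u with hu'
    have hu'U : u' ∈ U := pOps_mem U (fun v hv => (hUinv v hv).1) l u huU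
    have hu'j : u' j ≠ 0 := by
      rw [hu', pOps_apply]
      apply mul_ne_zero _ hj2
      apply List.prod_ne_zero
      intro h0
      rw [List.mem_map] at h0
      obtain ⟨k, hk1, hk2⟩ := h0
      rw [hl, Finset.mem_toList, Finset.mem_erase] at hk1
      have hkj : k.1 ≠ j.1 := fun h => hk1.1 (Subtype.ext h)
      apply hkj
      have : ((j.1 : ℂ)) = (k.1 : ℂ) := by linear_combination hk2
      exact_mod_cast this.symm
    have hu'other : ∀ k : E2, k ∈ Tfin → k ≠ j → u' k = 0 := by
      intro k hk hkj
      rw [hu', pOps_apply]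
      have h0 : (0:ℂ) ∈ l.map fun k' => ((k.1 : ℂ) - k'.1) := by
        rw [List.mem_map]
        exact ⟨k, by rw [hl, Finset.mem_toList, Finset.mem_erase]; exact ⟨hkj, hk⟩, by ring⟩
      rw [List.prod_eq_zero h0, zero_mul]
    -- single j 1 ∈ U
    have hsingle : Finsupp.single j (1:ℂ) ∈ U := by
      have hwmem : u' - u' j • Finsupp.single j 1 ∈ W := by
        rw [hmemW]
        intro k hk
        rw [Finsupp.sub_apply, Finsupp.smul_apply, Finsupp.single_apply]
        by_cases hkj : j = k
        · subst hkj; simp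
        · rw [if_neg hkj, smul_zero, sub_zero]
          exact hu'other k ((hTmem k).mpr hk) (fun h => hkj h.symm)
      have h1 : u' j • Finsupp.single j (1:ℂ) ∈ U := by
        have := U.sub_mem hu'U (hWU hwmem)
        simpa [sub_sub_cancel] using this
      have h2 := U.smul_mem (u' j)⁻¹ h1
      rwa [smul_smul, inv_mul_cancel₀ hu'j, one_smul] at h2
    obtain ⟨n, rfl⟩ := exists_gE j
    rw [gE_val, habs2] at hj1
    -- climb up to gE m
    have hup : ∀ i : ℕ, ∀ p : ℤ, -(m:ℤ) ≤ p → p + i = (m:ℤ) →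
        Finsupp.single (gE p) (1:ℂ) ∈ U → Finsupp.single (gE (m:ℤ)) (1:ℂ) ∈ U := by
      intro i
      induction i with
      | zero =>
        intro p _ hp hmem
        have : p = (m:ℤ) := by omega
        rwa [this] at hmem
      | succ i ih =>
        intro p h1 h2 hmem
        have hE := (hUinv _ hmem).2.1
        rw [opE_single, gE_up] at hE
        have hAne' : A (gE p) ≠ 0 := hAne _ (by rw [gE_val]; omega)
        have hnext : Finsupp.single (gE (p+1)) (1:ℂ) ∈ U := by
          have h3 := U.smul_mem (A (gE p))⁻¹ hE
          rwa [smul_smul, inv_mul_cancel₀ hAne', one_smul] at h3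
        exact ih (p+1) (by omega) (by push_cast at h2 ⊢; omega) hnext
    have htop1 : Finsupp.single (gE (m:ℤ)) (1:ℂ) ∈ U :=
      hup ((m:ℤ) - n).toNat n (by omega) (by omega) hsingle
    -- climb down
    have hdown : ∀ i : ℕ, (i:ℤ) ≤ 2*(m:ℤ) → Finsupp.single (gE ((m:ℤ) - i)) (1:ℂ) ∈ U := by
      intro i
      induction i with
      | zero => intro _; simpa using htop1
      | succ i ih =>
        intro h
        have hprev := ih (by push_cast at h ⊢; omega)
        have hF := (hUinv _ hprev).2.2
        rw [opF_single, gE_dn] at hF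
        have hBne' : B (gE ((m:ℤ) - i - 1)) ≠ 0 := hBne _ (by rw [gE_val]; omega)
        have hnext : Finsupp.single (gE ((m:ℤ) - i - 1)) (1:ℂ) ∈ U := by
          have h3 := U.smul_mem (B (gE ((m:ℤ) - i - 1)))⁻¹ hF
          rwa [smul_smul, inv_mul_cancel₀ hBne', one_smul] at h3
        have : (m:ℤ) - ((i+1 : ℕ):ℤ) = (m:ℤ) - i - 1 := by push_cast; ring
        rwa [this]
    have hallT : ∀ k : E2, |k.1| ≤ 2*(m:ℤ) → Finsupp.single k (1:ℂ) ∈ U := by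
      intro k hk
      obtain ⟨p, rfl⟩ := exists_gE k
      rw [gE_val, habs2] at hk
      have h1 := hdown ((m:ℤ) - p).toNat (by omega)
      have h2 : (m:ℤ) - (((m:ℤ) - p).toNat : ℤ) = p := by omega
      rwa [h2] at h1
    rw [eq_top_iff, ← Finsupp.supported_univ (M := ℂ) (R := ℂ) (α := E2),
      Finsupp.supported_eq_span_single, Submodule.span_le]
    rintro _ ⟨k, -, rfl⟩
    rcases le_or_gt |k.1| (2*(m:ℤ)) with h | h
    · exact hallT k h
    · exact hWU (hgenW k h)
end
end

section
/- Let V be a pre-Hilbert space decomposing as an orthogonal direct sum of finite-dimensional subspaces V = ⊕_n V_n, and let Δ: V → V be a symmetric linear operator preserving each V_n. Then Δ, viewed as a densely defined operator on the Hilbert space completion of V with domain the algebraic direct sum, is essentially self-adjoint. -/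
noncomputable section

local notation "⟪" x ", " y "⟫" => @inner ℂ _ _ x y

lemma aux_range_eq_univ
    (V : Type) [NormedAddCommGroup V] [InnerProductSpace ℂ V]
    (Vn : ℕ → Submodule ℂ V)
    (hfin : ∀ n, FiniteDimensional ℂ ↥(Vn n))
    (hsum : (⨆ n, Vn n) = ⊤)
    (Δ : V →ₗ[ℂ] V)
    (hsymm : ∀ v w : V, ⟪Δ v, w⟫ = ⟪v, Δ w⟫)
    (hpres : ∀ n, ∀ v ∈ Vn n, Δ v ∈ Vn n)
    (c : ℂ) (hc : c.im ≠ 0) :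
    Set.range (fun v : V => Δ v + c • v) = Set.univ := by
  set T : V →ₗ[ℂ] V := Δ + c • LinearMap.id with hT
  have hTapp : ∀ v : V, T v = Δ v + c • v := fun v => rfl
  have hrange : LinearMap.range T = ⊤ := by
    rw [eq_top_iff, ← hsum]
    apply iSup_le
    intro n
    intro w hw
    -- restrict T to Vn n
    have hmap : ∀ x ∈ Vn n, T x ∈ Vn n := by
      intro x hx
      rw [hTapp]
      exact (Vn n).add_mem (hpres n x hx) ((Vn n).smul_mem c hx)
    set f : ↥(Vn n) →ₗ[ℂ] ↥(Vn n) := T.restrict hmap with hf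
    have hinj : Function.Injective f := by
      rw [← LinearMap.ker_eq_bot, LinearMap.ker_eq_bot']
      intro x hx
      have hx0 : T (x : V) = 0 := by
        have := congrArg (Subtype.val) hx
        simpa [f, LinearMap.restrict_apply] using this
      rw [hTapp] at hx0
      have hinner : ⟪(x : V), Δ (x : V) + c • (x : V)⟫ = 0 := by
        rw [hx0]; exact inner_zero_right _
      rw [inner_add_right, inner_smul_right] at hinner
      have hreal : (starRingEnd ℂ) ⟪(x : V), Δ (x : V)⟫ = ⟪(x : V), Δ (x : V)⟫ := by
        rw [inner_conj_symm]; exact hsymm _ _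
      have him : (⟪(x : V), Δ (x : V)⟫).im = 0 := by
        have h := congrArg Complex.im hreal
        rw [Complex.conj_im] at h
        linarith
      have hxx : ⟪(x : V), (x : V)⟫ = ((‖(x : V)‖ ^ 2 : ℝ) : ℂ) := by
        rw [inner_self_eq_norm_sq_to_K]; norm_cast
      rw [hxx] at hinner
      have him2 := congrArg Complex.im hinner
      rw [Complex.add_im, Complex.mul_im, Complex.ofReal_im, Complex.ofReal_re,
        him, Complex.zero_im] at him2
      have hmul : c.im * ‖(x : V)‖ ^ 2 = 0 := by linarith
      have hsq : ‖(x : V)‖ ^ 2 = 0 := (mul_eq_zero.mp hmul).resolve_left hc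
      have hnorm : ‖(x : V)‖ = 0 := by
        have := pow_eq_zero_iff (n := 2) (by norm_num) |>.mp hsq
        exact this
      have : (x : V) = 0 := norm_eq_zero.mp hnorm
      exact Subtype.ext this
    have hsurj : Function.Surjective f :=
      (LinearMap.injective_iff_surjective (f := f)).mp hinj
    obtain ⟨x, hx⟩ := hsurj ⟨w, hw⟩
    refine ⟨(x : V), ?_⟩
    have := congrArg (Subtype.val) hx
    simpa [f, LinearMap.restrict_apply] using this
  have : Set.range (fun v : V => Δ v + c • v) = (LinearMap.range T : Set V) := by
    ext y; simp [LinearMap.mem_range, hTapp]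
  rw [this, hrange]
  simp

/-- Nelson-type essential self-adjointness criterion: if a pre-Hilbert space V is an
orthogonal (algebraic) direct sum of finite-dimensional subspaces Vₙ and Δ is a symmetric
operator preserving each Vₙ, then Δ is essentially self-adjoint; equivalently, the ranges
of Δ ± i are dense (in V, hence in the Hilbert space completion, on which Δ is densely
defined with domain V). -/
theorem essentially_self_adjoint_of_invariant_decomposition
    (V : Type) [NormedAddCommGroup V] [InnerProductSpace ℂ V]
    (Vn : ℕ → Submodule ℂ V)
    (hfin : ∀ n, FiniteDimensional ℂ ↥(Vn n))
    (horth : ∀ m n, m ≠ n → ∀ v ∈ Vn m, ∀ w ∈ Vn n, ⟪v, w⟫ = 0)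
    (hsum : (⨆ n, Vn n) = ⊤)
    (Δ : V →ₗ[ℂ] V)
    (hsymm : ∀ v w : V, ⟪Δ v, w⟫ = ⟪v, Δ w⟫)
    (hpres : ∀ n, ∀ v ∈ Vn n, Δ v ∈ Vn n) :
    Dense (Set.range fun v : V => Δ v + Complex.I • v) ∧
    Dense (Set.range fun v : V => Δ v - Complex.I • v) := by
  constructor
  · have h := aux_range_eq_univ V Vn hfin hsum Δ hsymm hpres Complex.I (by simp)
    rw [h]; exact dense_univ
  · have h := aux_range_eq_univ V Vn hfin hsum Δ hsymm hpres (-Complex.I) (by simp)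
    have heq : (Set.range fun v : V => Δ v - Complex.I • v)
        = Set.range (fun v : V => Δ v + (-Complex.I) • v) := by
      ext y; simp [sub_eq_add_neg, neg_smul]
    rw [heq, h]; exact dense_univ
end
end

section
/- For the contraction family of real groups G^σ(x) = { (⟨⟨a,b⟩,⟨x·conj b, conj a⟩⟩, ⟨⟨a,xb⟩,⟨conj b, conj a⟩⟩) : |a|² - x|b|² = 1 }, at x = 0 the group G^σ(0) is isomorphic to the semidirect product U(1) ⋉ ℂ where u ∈ U(1) acts on ℂ by w ↦ u²·w. -/
open Matrix ComplexConjugate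

noncomputable section

def G0set : Set (GeneralLinearGroup (Fin 2) ℂ × GeneralLinearGroup (Fin 2) ℂ) :=
  {P | ∃ a b : ℂ, Complex.normSq a = 1 ∧
    (P.1 : Matrix (Fin 2) (Fin 2) ℂ) = !![a, b; 0, conj a] ∧
    (P.2 : Matrix (Fin 2) (Fin 2) ℂ) = !![a, 0; conj b, conj a]}

lemma aux_conj (a : ℂ) (ha : Complex.normSq a = 1) : a * conj a = 1 := by
  rw [Complex.mul_conj]; exact_mod_cast ha

def glA (a b : ℂ) (ha : Complex.normSq a = 1) : GeneralLinearGroup (Fin 2) ℂ :=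
  ⟨!![a, b; 0, conj a], !![conj a, -b; 0, a], by
    have h := aux_conj a ha
    have h' : conj a * a = 1 := by rw [mul_comm]; exact h
    rw [Matrix.mul_fin_two, Matrix.one_fin_two]
    congr 1 <;> ring_nf <;> simp [h, h'], by
    have h := aux_conj a ha
    have h' : conj a * a = 1 := by rw [mul_comm]; exact h
    rw [Matrix.mul_fin_two, Matrix.one_fin_two]
    congr 1 <;> ring_nf <;> simp [h, h']⟩

def glB (a b : ℂ) (ha : Complex.normSq a = 1) : GeneralLinearGroup (Fin 2) ℂ :=
  ⟨!![a, 0; conj b, conj a], !![conj a, 0; -conj b, a], by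
    have h := aux_conj a ha
    have h' : conj a * a = 1 := by rw [mul_comm]; exact h
    rw [Matrix.mul_fin_two, Matrix.one_fin_two]
    congr 1 <;> ring_nf <;> simp [h, h'], by
    have h := aux_conj a ha
    have h' : conj a * a = 1 := by rw [mul_comm]; exact h
    rw [Matrix.mul_fin_two, Matrix.one_fin_two]
    congr 1 <;> ring_nf <;> simp [h, h']⟩

lemma mem_G0 (a b : ℂ) (ha : Complex.normSq a = 1) :
    (glA a b ha, glB a b ha) ∈ G0set := ⟨a, b, ha, rfl, rfl⟩

/-- G^σ(0) is isomorphic to the semidirect product U(1) ⋉ ℂ, where u ∈ U(1) acts on ℂ by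
w ↦ u²w: the map sending the element with parameters (a, b) to (a, a·b) is a bijection
onto {(u,w) : |u| = 1} ⊆ ℂ × ℂ, intertwining the group multiplications, where the product
on U(1) ⋉ ℂ is (u₁,w₁)(u₂,w₂) = (u₁u₂, w₁ + u₁²w₂). -/
theorem motion_group_fiber_iso_semidirect :
    (∀ P ∈ G0set, ∀ Q ∈ G0set, P * Q ∈ G0set) ∧
    ∃ e : G0set → ℂ × ℂ,
      Function.Injective e ∧
      Set.range e = {q : ℂ × ℂ | Complex.normSq q.1 = 1} ∧
      (∀ (P : G0set) (a b : ℂ), Complex.normSq a = 1 →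
        ((P : GeneralLinearGroup (Fin 2) ℂ × GeneralLinearGroup (Fin 2) ℂ).1 :
          Matrix (Fin 2) (Fin 2) ℂ) = !![a, b; 0, conj a] →
        e P = (a, a * b)) ∧
      (∀ (P Q : G0set) (hPQ : P.val * Q.val ∈ G0set),
        e ⟨P.val * Q.val, hPQ⟩ =
          ((e P).1 * (e Q).1, (e P).2 + (e P).1 ^ 2 * (e Q).2)) := by
  have hclosed : ∀ P ∈ G0set, ∀ Q ∈ G0set, P * Q ∈ G0set := by
    rintro P ⟨a1, b1, ha1, h1, h2⟩ Q ⟨a2, b2, ha2, h3, h4⟩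
    refine ⟨a1 * a2, a1 * b2 + b1 * conj a2, ?_, ?_, ?_⟩
    · rw [Complex.normSq_mul, ha1, ha2, one_mul]
    · show ((P.1 * Q.1 : GeneralLinearGroup (Fin 2) ℂ) : Matrix (Fin 2) (Fin 2) ℂ) = _
      rw [Units.val_mul, h1, h3, Matrix.mul_fin_two]
      simp [mul_comm]
    · show ((P.2 * Q.2 : GeneralLinearGroup (Fin 2) ℂ) : Matrix (Fin 2) (Fin 2) ℂ) = _
      rw [Units.val_mul, h2, h4, Matrix.mul_fin_two]
      simp [mul_comm, mul_add]
      ring_nf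
  refine ⟨hclosed, fun P => ((P.val.1 : Matrix (Fin 2) (Fin 2) ℂ) 0 0,
      (P.val.1 : Matrix (Fin 2) (Fin 2) ℂ) 0 0 *
      (P.val.1 : Matrix (Fin 2) (Fin 2) ℂ) 0 1), ?_, ?_, ?_, ?_⟩
  · rintro ⟨P, aP, bP, haP, hP1, hP2⟩ ⟨Q, aQ, bQ, haQ, hQ1, hQ2⟩ h
    simp only [hP1, hQ1, Prod.mk.injEq] at h
    simp at h
    obtain ⟨ha, hab⟩ := h
    have haP0 : aP ≠ 0 := by intro h0; rw [h0] at haP; simp at haP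
    have hb : bP = bQ := by
      have := hab
      rw [ha] at this
      exact mul_left_cancel₀ (ha ▸ haP0) this
    ext : 2
    · exact Units.ext (by rw [hP1, hQ1, ha, hb])
    · exact Units.ext (by rw [hP2, hQ2, ha, hb])
  · ext ⟨u, w⟩
    constructor
    · rintro ⟨⟨P, aP, bP, haP, hP1, hP2⟩, h⟩
      simp only [hP1] at h
      simp at h
      rw [← h.1]
      simpa [← h.1] using haP
    · rintro hu
      refine ⟨⟨(glA u (conj u * w) hu, glB u (conj u * w) hu), mem_G0 u (conj u * w) hu⟩, ?_⟩
      have h := aux_conj u hu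
      show (_, _) = (u, w)
      simp only [glA]
      simp
      rw [← mul_assoc, h, one_mul]
  · rintro ⟨P, hP⟩ a b ha h1
    replace h1 : (P.1 : Matrix (Fin 2) (Fin 2) ℂ) = !![a, b; 0, conj a] := h1
    simp only [h1]
    simp
  · rintro ⟨P, pP⟩ ⟨Q, pQ⟩ hPQ
    obtain ⟨a1, b1, ha1, h1, h2⟩ := pP
    obtain ⟨a2, b2, ha2, h3, h4⟩ := pQ
    have hm : ((P * Q).1 : Matrix (Fin 2) (Fin 2) ℂ) = (P.1 : Matrix (Fin 2) (Fin 2) ℂ) * (Q.1 : Matrix (Fin 2) (Fin 2) ℂ) := rfl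
    simp only [hm, h1, h3, Matrix.mul_fin_two]
    have hc2 := aux_conj a2 ha2
    simp
    ring_nf
    rw [mul_comm a2 (conj a2)] at hc2
    linear_combination a1 * b1 * hc2
end
end
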